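/- Let g₁, g₂ : [0,b] → [0,1] and for s ∈ [0,b] define M(s) = max( sup_{t ∈ [a,s]} min(g₂(t), inf_{t'∈[0,t]} g₁(t')), inf_{t'∈[0,s]} g₁(t') ) (with sup over empty set taken as 0). Then M is monotonically non-increasing in s. -/

import Mathlib

/-! Write `m t = inf g₁ [0,t]` for the prefix infimum, which is antitone in `t`. Each term
`min (g₂ t) (m t)` of the supremum is at most `m t`, so the terms with `t ∈ (s₁, s₂]` that
the longer prefix adds are bounded by `m s₁`; the other terms already occur at `s₁`, and
`m s₂ ≤ m s₁`. -/

open Set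

theorem csInf_image_Icc_le_of_le {α β : Type*} [Preorder α] [ConditionallyCompleteLattice β]
    {g : α → β} {x s t : α} (hxs : x ≤ s) (hst : s ≤ t) (hbdd : BddBelow (g '' Icc x t)) :
    sInf (g '' Icc x t) ≤ sInf (g '' Icc x s) :=
  csInf_le_csInf hbdd ((nonempty_Icc.2 hxs).image g) (image_mono (Icc_subset_Icc_right hst))

theorem csSup_image_Icc_le_max {α β : Type*} [LinearOrder α]
    [ConditionallyCompleteLinearOrder β]
    {f : α → β} {a s₁ s₂ : α} {c : β} (h12 : s₁ ≤ s₂) (hbdd : BddAbove (f '' Icc a s₁))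
    (htail : ∀ t ∈ Ioc s₁ s₂, f t ≤ c) :
    sSup (f '' Icc a s₂) ≤ max (sSup (f '' Icc a s₁)) c := by
  rcases (Icc a s₂).eq_empty_or_nonempty with hempty | hne
  · -- both suprema are the same junk value `sSup ∅`
    have hempty₁ : Icc a s₁ = ∅ := subset_empty_iff.1 (hempty ▸ Icc_subset_Icc_right h12)
    rw [hempty, hempty₁]
    exact le_max_left _ _
  refine csSup_le (hne.image f) (forall_mem_image.2 fun t ⟨hat, hts₂⟩ => ?_)
  rcases le_or_gt t s₁ with hts₁ | hs₁t
  · exact le_max_of_le_left (le_csSup hbdd (mem_image_of_mem f ⟨hat, hts₁⟩))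
  · exact le_max_of_le_right (htail t ⟨hs₁t, hts₂⟩)

theorem until_monitor_upper_antitone_general (a b : ℝ)
    (g₁ g₂ : ℝ → ℝ)
    (hg₁ : ∀ t, g₁ t ∈ Set.Icc (0:ℝ) 1) (hg₂ : ∀ t, g₂ t ∈ Set.Icc (0:ℝ) 1)
    (s₁ s₂ : ℝ) (hs₁ : s₁ ∈ Set.Icc 0 b) (h12 : s₁ ≤ s₂) :
    max (sSup ((fun t => min (g₂ t) (sInf (g₁ '' Set.Icc 0 t))) '' Set.Icc a s₂))
        (sInf (g₁ '' Set.Icc 0 s₂))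
      ≤ max (sSup ((fun t => min (g₂ t) (sInf (g₁ '' Set.Icc 0 t))) '' Set.Icc a s₁))
        (sInf (g₁ '' Set.Icc 0 s₁)) := by
  have hprefix_le : ∀ t, s₁ ≤ t → sInf (g₁ '' Icc 0 t) ≤ sInf (g₁ '' Icc 0 s₁) := fun t ht =>
    csInf_image_Icc_le_of_le hs₁.1 ht ⟨0, forall_mem_image.2 fun u _ => (hg₁ u).1⟩
  have hbdd : BddAbove ((fun t => min (g₂ t) (sInf (g₁ '' Icc 0 t))) '' Icc a s₁) :=
    ⟨1, forall_mem_image.2 fun t _ => (min_le_left _ _).trans (hg₂ t).2⟩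
  exact max_le
    (csSup_image_Icc_le_max h12 hbdd fun t ht =>
      (min_le_right _ _).trans (hprefix_le t ht.1.le))
    (le_max_of_le_right (hprefix_le s₂ h12))

theorem until_monitor_upper_antitone (a b : ℝ) (hab : a ≤ b)
    (g₁ g₂ : ℝ → ℝ)
    (hg₁ : ∀ t, g₁ t ∈ Set.Icc (0:ℝ) 1) (hg₂ : ∀ t, g₂ t ∈ Set.Icc (0:ℝ) 1)
    (s₁ s₂ : ℝ) (hs₁ : s₁ ∈ Set.Icc 0 b) (hs₂ : s₂ ∈ Set.Icc 0 b) (h12 : s₁ ≤ s₂) :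
    max (sSup ((fun t => min (g₂ t) (sInf (g₁ '' Set.Icc 0 t))) '' Set.Icc a s₂))
        (sInf (g₁ '' Set.Icc 0 s₂))
      ≤ max (sSup ((fun t => min (g₂ t) (sInf (g₁ '' Set.Icc 0 t))) '' Set.Icc a s₁))
        (sInf (g₁ '' Set.Icc 0 s₁)) :=
  until_monitor_upper_antitone_general a b g₁ g₂ hg₁ hg₂ s₁ s₂ hs₁ h12
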